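/- arXiv:1712.07367 — 2 statements merged into one kernel-verified Lean document; each statement's English description precedes it below -/
import Mathlib

section
/- Let Wₙ be a sequence of graphons on Ω converging in cut-norm to a graphon W, and let Iₙ ⊆ Ω be an independent set in Wₙ for each n. If the indicator functions 1_{Iₙ} converge weak* to a function f, then supp(f) is an independent set in W. -/
open MeasureTheory ENNReal Filter
open scoped Classical

noncomputable section

variable {Ω : Type*} [MeasurableSpace Ω]

/-- A graphon: symmetric measurable function with values in `[0,1]`. -/
def IsGraphon (W : Ω → Ω → ℝ) : Prop :=
  Measurable (Function.uncurry W) ∧ (∀ x y, W x y = W y x) ∧ ∀ x y, W x y ∈ Set.Icc (0 : ℝ) 1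

/-- `A` is an independent set of the graphon `W`: `W = 0` a.e. on `A × A`. -/
def IsIndepSet (μ : Measure Ω) (W : Ω → Ω → ℝ) (A : Set Ω) : Prop :=
  MeasurableSet A ∧ ∀ᵐ p ∂(μ.prod μ), p.1 ∈ A → p.2 ∈ A → W p.1 p.2 = 0

/-- The independence number: supremum of measures of independent sets. -/
def indepNum (μ : Measure Ω) (W : Ω → Ω → ℝ) : ℝ≥0∞ :=
  ⨆ (A : Set Ω) (_ : IsIndepSet μ W A), μ A

/-- Homomorphism density of a finite graph `H` on `Fin k` in `W`
(product over unordered edges, written with `i < j`). -/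
def homDensity {k : ℕ} (μ : Measure Ω) (W : Ω → Ω → ℝ) (H : SimpleGraph (Fin k)) : ℝ :=
  ∫ x : Fin k → Ω,
    ∏ p ∈ Finset.univ.filter (fun p : Fin k × Fin k => p.1 < p.2 ∧ H.Adj p.1 p.2),
      W (x p.1) (x p.2) ∂(Measure.pi fun _ => μ)

/-- The cut norm of a kernel `U`. -/
def cutNorm (μ : Measure Ω) (U : Ω → Ω → ℝ) : ℝ :=
  ⨆ (S : {S : Set Ω // MeasurableSet S}) (T : {T : Set Ω // MeasurableSet T}),
    |∫ p in S.1 ×ˢ T.1, U p.1 p.2 ∂(μ.prod μ)|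

/-- The cut distance: infimum over measure-preserving isomorphisms of the cut norm. -/
def cutDist (μ : Measure Ω) (W₁ W₂ : Ω → Ω → ℝ) : ℝ :=
  ⨅ (e : {e : Ω ≃ᵐ Ω // MeasurePreserving e μ μ}),
    cutNorm μ (fun x y => W₁ x y - W₂ (e.1 x) (e.1 y))

/-- `W` is a graphon representation of the finite graph `G`. -/
def IsGraphonRep {V : Type*} [Fintype V] (μ : Measure Ω) (G : SimpleGraph V)
    (W : Ω → Ω → ℝ) : Prop :=
  ∃ P : V → Set Ω, (∀ v, MeasurableSet (P v)) ∧ Pairwise (Function.onFun Disjoint P) ∧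
    (∀ v, μ (P v) = 1 / (Fintype.card V : ℝ≥0∞)) ∧ (⋃ v, P v) = Set.univ ∧
    ∀ u v, ∀ᵐ p ∂(μ.prod μ), p.1 ∈ P u → p.2 ∈ P v →
      W p.1 p.2 = if G.Adj u v then 1 else 0

/-- The chromatic number of a graphon, as an extended natural number. -/
def graphonChrom (μ : Measure Ω) (W : Ω → Ω → ℝ) : ℕ∞ :=
  sInf ((↑) '' {k : ℕ | ∃ f : Ω → Fin k, Measurable f ∧ ∀ i, IsIndepSet μ W (f ⁻¹' {i})})

/-- A fractional coloring of a graphon. -/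
def IsFracColoring (μ : Measure Ω) (W : Ω → Ω → ℝ) (c : Set Ω → ℝ≥0∞) : Prop :=
  (∀ I, c I ≤ 1) ∧ (∀ I, ¬ IsIndepSet μ W I → c I = 0) ∧
    ∀ᵐ x ∂μ, 1 ≤ ∑' I : Set Ω, Set.indicator I (fun _ => c I) x

/-- The fractional chromatic number of a graphon. -/
def graphonFracChrom (μ : Measure Ω) (W : Ω → Ω → ℝ) : ℝ≥0∞ :=
  ⨅ (c : Set Ω → ℝ≥0∞) (_ : IsFracColoring μ W c), ∑' I : Set Ω, c I

/-- A fractional clique of a graphon. -/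
def IsFracClique (μ : Measure Ω) (W : Ω → Ω → ℝ) (f : Ω → ℝ≥0∞) : Prop :=
  Measurable f ∧ (∀ x, f x ≠ ∞) ∧ ∀ I, IsIndepSet μ W I → ∫⁻ x in I, f x ∂μ ≤ 1

/-- The fractional clique number of a graphon. -/
def graphonFracClique (μ : Measure Ω) (W : Ω → Ω → ℝ) : ℝ≥0∞ :=
  ⨆ (f : Ω → ℝ≥0∞) (_ : IsFracClique μ W f), ∫⁻ x, f x ∂μ

/-- The clique number of a graphon. -/
def graphonClique (μ : Measure Ω) (W : Ω → Ω → ℝ) : ℕ∞ :=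
  sSup ((↑) '' {r : ℕ | 0 < homDensity μ W (⊤ : SimpleGraph (Fin r))})

/-- Independent set of a finite simple graph. -/
def GraphIndep {V : Type*} (G : SimpleGraph V) (I : Set V) : Prop :=
  I.Pairwise fun u v => ¬ G.Adj u v

/-- Fractional chromatic number of a finite graph. -/
def fracChrom {V : Type*} [Fintype V] (G : SimpleGraph V) : ℝ≥0∞ :=
  ⨅ (c : Set V → ℝ≥0∞) (_ : (∀ I, c I ≤ 1) ∧ (∀ I, ¬ GraphIndep G I → c I = 0) ∧
      ∀ v, 1 ≤ ∑' I : Set V, Set.indicator I (fun _ => c I) v),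
    ∑' I : Set V, c I

/-- Fractional clique number of a finite graph. -/
def fracClique {V : Type*} [Fintype V] (G : SimpleGraph V) : ℝ≥0∞ :=
  ⨆ (f : V → ℝ≥0∞) (_ : ∀ I : Set V, GraphIndep G I → ∑' v : I, f v ≤ 1),
    ∑ v, f v

/-- The b-fold chromatic number of a graphon. -/
def bFoldChrom (μ : Measure Ω) (W : Ω → Ω → ℝ) (b : ℕ) : ℕ∞ :=
  sInf ((↑) '' {k : ℕ | ∃ p : Ω → Finset (Fin k),
    (∀ i, MeasurableSet {x | i ∈ p x}) ∧ (∀ x, (p x).card = b) ∧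
    ∀ᵐ q ∂(μ.prod μ), W q.1 q.2 = 0 ∨ p q.1 ∩ p q.2 = ∅})

/-- Membership in the weak* closure of the convex hull of indicators of
independent sets (the independent set polyton `IND(W)`). -/
def InIND (μ : Measure Ω) (W : Ω → Ω → ℝ) (f : Ω → ℝ) : Prop :=
  ∀ (ε : ℝ), 0 < ε → ∀ (m : ℕ) (g : Fin m → Ω → ℝ), (∀ i, Integrable (g i) μ) →
    ∃ (t : ℕ) (a : Fin t → ℝ) (I : Fin t → Set Ω),
      (∀ j, 0 ≤ a j) ∧ (∑ j, a j = 1) ∧ (∀ j, IsIndepSet μ W (I j)) ∧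
      ∀ i, |∫ x, ((∑ j, a j * Set.indicator (I j) 1 x) - f x) * g i x ∂μ| < ε

end

/-!
Write `u_n = 1_{I_n}` and `T v (x) = ∫ v(y) W(x,y) dy`. Testing the weak* convergence against
bounded functions gives `0 ≤ f ≤ 1` a.e. Independence of `I_n` in `W_n` gives
`|⟨u_n, T u_n⟩| = |∫_{I_n × I_n} W| ≤ ‖W_n - W‖_□ → 0`. On the other hand `T u_n → T f`
pointwise (test against `W(x, ·)`), hence in `L¹` by dominated convergence, so
`⟨u_n, T u_n⟩ → ⟨f, T f⟩`. Thus `∫∫ f(x) f(y) W(x,y) = 0` with a nonnegative integrand, and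
`W = 0` a.e. on `supp f × supp f`.
-/

open MeasureTheory Filter Topology

namespace IsGraphon

variable {Ω : Type*} [MeasurableSpace Ω] {W : Ω → Ω → ℝ}

lemma abs_le_one (hW : IsGraphon W) (x y : Ω) : |W x y| ≤ 1 :=
  abs_le.2 ⟨by linarith [(hW.2.2 x y).1], (hW.2.2 x y).2⟩

lemma integrable (hW : IsGraphon W) (μ : Measure Ω) [IsFiniteMeasure μ] :
    Integrable (fun p : Ω × Ω => W p.1 p.2) (μ.prod μ) :=
  .of_bound hW.1.aestronglyMeasurable 1 (ae_of_all _ fun p => hW.abs_le_one p.1 p.2)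

end IsGraphon

section CutNorm

variable {Ω : Type*} [MeasurableSpace Ω] {μ : Measure Ω}

lemma abs_setIntegral_prod_le_cutNorm [SFinite μ] {U : Ω → Ω → ℝ}
    (hU : Integrable (fun p : Ω × Ω => U p.1 p.2) (μ.prod μ)) {S T : Set Ω}
    (hS : MeasurableSet S) (hT : MeasurableSet T) :
    |∫ p in S ×ˢ T, U p.1 p.2 ∂(μ.prod μ)| ≤ cutNorm μ U := by
  have hbound : ∀ S' T' : Set Ω, |∫ p in S' ×ˢ T', U p.1 p.2 ∂(μ.prod μ)| ≤
      ∫ p, |U p.1 p.2| ∂(μ.prod μ) := fun S' T' =>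
    (abs_integral_le_integral_abs).trans
      (setIntegral_le_integral hU.abs (ae_of_all _ fun _ => abs_nonneg _))
  refine le_ciSup_of_le ⟨_, Set.forall_mem_range.2 fun S' => ciSup_le fun T' => hbound S'.1 T'.1⟩
    ⟨S, hS⟩ ?_
  exact le_ciSup_of_le ⟨_, Set.forall_mem_range.2 fun T' => hbound S T'.1⟩ ⟨T, hT⟩ le_rfl

lemma IsIndepSet.setIntegral_prod_eq_zero {W : Ω → Ω → ℝ} {A : Set Ω} (hA : IsIndepSet μ W A) :
    ∫ p in A ×ˢ A, W p.1 p.2 ∂(μ.prod μ) = 0 :=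
  setIntegral_eq_zero_of_ae_eq_zero (hA.2.mono fun _ hp hmem => hp hmem.1 hmem.2)

lemma IsIndepSet.abs_setIntegral_prod_le_cutNorm_sub [SFinite μ] {W W' : Ω → Ω → ℝ} {A : Set Ω}
    (hA : IsIndepSet μ W' A) (hW : Integrable (fun p : Ω × Ω => W p.1 p.2) (μ.prod μ))
    (hW' : Integrable (fun p : Ω × Ω => W' p.1 p.2) (μ.prod μ)) :
    |∫ p in A ×ˢ A, W p.1 p.2 ∂(μ.prod μ)| ≤ cutNorm μ (fun x y => W' x y - W x y) := by
  have h := abs_setIntegral_prod_le_cutNorm (U := fun x y => W' x y - W x y) (hW'.sub hW) hA.1 hA.1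
  rwa [integral_sub hW'.integrableOn hW.integrableOn, hA.setIntegral_prod_eq_zero, zero_sub,
    abs_neg] at h

end CutNorm

section WeakLimit

variable {Ω : Type*} [MeasurableSpace Ω] {μ : Measure Ω} [IsFiniteMeasure μ]

lemma ae_nonneg_of_forall_integral_mul_nonneg {f : Ω → ℝ} (hf : Measurable f)
    (h : ∀ g : Ω → ℝ, Integrable g μ → 0 ≤ g → 0 ≤ ∫ x, f x * g x ∂μ) : 0 ≤ᵐ[μ] f := by
  -- `f / (1 + |f|)` is bounded, hence integrable, and has the sign of `f`
  set w : Ω → ℝ := fun x => 1 / (1 + |f x|)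
  have hw_pos : ∀ x, 0 < w x := fun x => by positivity
  have hw_meas : Measurable w := by fun_prop
  have hfw : 0 ≤ᵐ[μ] fun x => f x * w x := by
    refine ae_nonneg_of_forall_setIntegral_nonneg ?_ fun s hs _ => ?_
    · refine .of_bound (by fun_prop) 1 (ae_of_all _ fun x => ?_)
      rw [Real.norm_eq_abs, abs_mul, abs_of_pos (hw_pos x), ← div_eq_mul_one_div,
        div_le_one (by positivity)]
      linarith
    · have hg : Integrable (s.indicator w) μ :=
        (Integrable.of_bound hw_meas.aestronglyMeasurable 1 (ae_of_all _ fun x => by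
          rw [Real.norm_eq_abs, abs_of_pos (hw_pos x), div_le_one (by positivity)]
          linarith [abs_nonneg (f x)])).indicator hs
      rw [← integral_indicator hs]
      simpa only [Set.indicator_mul_right] using
        h _ hg (Set.indicator_nonneg fun x _ => (hw_pos x).le)
  filter_upwards [hfw] with x hx
  exact nonneg_of_mul_nonneg_left hx (hw_pos x)

lemma ae_mem_Icc_of_tendsto_integral_mul {u : ℕ → Ω → ℝ} (hu : ∀ n x, u n x ∈ Set.Icc 0 1)
    {f : Ω → ℝ} (hf : Measurable f)
    (hweak : ∀ g : Ω → ℝ, Integrable g μ →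
      Tendsto (fun n => ∫ x, u n x * g x ∂μ) atTop (𝓝 (∫ x, f x * g x ∂μ))) :
    ∀ᵐ x ∂μ, f x ∈ Set.Icc 0 1 := by
  have hf0 := ae_nonneg_of_forall_integral_mul_nonneg hf fun g hg hg0 =>
    ge_of_tendsto' (hweak g hg) fun n => integral_nonneg fun x => mul_nonneg (hu n x).1 (hg0 x)
  have hf1 := ae_nonneg_of_forall_integral_mul_nonneg (f := fun x => 1 - f x) (by fun_prop)
      fun g hg hg0 => by
    by_cases hfg : Integrable (fun x => f x * g x) μ
    · have hle : ∫ x, f x * g x ∂μ ≤ ∫ x, g x ∂μ :=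
        le_of_tendsto' (hweak g hg) fun n => integral_mono_of_nonneg
          (ae_of_all _ fun x => mul_nonneg (hu n x).1 (hg0 x)) hg
          (ae_of_all _ fun x => mul_le_of_le_one_left (hg0 x) (hu n x).2)
      simp only [sub_mul, one_mul]
      rw [integral_sub hg hfg]
      linarith
    · -- junk case: `(1 - f) * g` is not integrable either, so its integral is `0`
      refine (integral_undef fun h => hfg ((hg.sub h).congr (ae_of_all _ fun x => ?_))).ge
      simp only [Pi.sub_apply]
      ring
  filter_upwards [hf0, hf1] with x h0 h1
  exact ⟨h0, by simpa using h1⟩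

end WeakLimit

section Kernel

variable {Ω : Type*} [MeasurableSpace Ω] {μ : Measure Ω}

lemma integral_indicator_one_mul {s : Set Ω} (hs : MeasurableSet s) (F : Ω → ℝ) :
    ∫ x, s.indicator 1 x * F x ∂μ = ∫ x in s, F x ∂μ := by
  rw [← integral_indicator hs]
  congr with x
  by_cases hx : x ∈ s <;> simp [hx]

lemma setIntegral_prod_self_eq_integral_indicator_mul [SFinite μ] {A : Set Ω}
    (hA : MeasurableSet A) {K : Ω → Ω → ℝ}
    (hK : Integrable (fun p : Ω × Ω => K p.1 p.2) (μ.prod μ)) :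
    ∫ p in A ×ˢ A, K p.1 p.2 ∂(μ.prod μ) =
      ∫ x, A.indicator 1 x * ∫ y, A.indicator 1 y * K x y ∂μ ∂μ := by
  simp only [integral_indicator_one_mul hA]
  exact setIntegral_prod _ hK.integrableOn

lemma MeasureTheory.Integrable.mul_mul_prod_bdd [SFinite μ] {φ : Ω → ℝ} (hφ : Integrable φ μ)
    {K : Ω → Ω → ℝ} (hK : Measurable (Function.uncurry K)) {C : ℝ} (hKC : ∀ x y, |K x y| ≤ C) :
    Integrable (fun p : Ω × Ω => φ p.1 * (φ p.2 * K p.1 p.2)) (μ.prod μ) := by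
  simp only [← mul_assoc]
  exact (hφ.mul_prod hφ).mul_bdd hK.aestronglyMeasurable (ae_of_all _ fun p => hKC p.1 p.2)

lemma integral_mul_integral_mul_eq_integral_prod [SFinite μ] {φ : Ω → ℝ} (hφ : Integrable φ μ)
    {K : Ω → Ω → ℝ} (hK : Measurable (Function.uncurry K)) {C : ℝ} (hKC : ∀ x y, |K x y| ≤ C) :
    ∫ x, φ x * ∫ y, φ y * K x y ∂μ ∂μ = ∫ p, φ p.1 * (φ p.2 * K p.1 p.2) ∂(μ.prod μ) := by
  rw [integral_prod _ (hφ.mul_mul_prod_bdd hK hKC)]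
  simp only [integral_const_mul]

lemma stronglyMeasurable_integral_mul [SFinite μ] {v : Ω → ℝ} (hv : Measurable v)
    {K : Ω → Ω → ℝ} (hK : Measurable (Function.uncurry K)) :
    StronglyMeasurable fun x => ∫ y, v y * K x y ∂μ :=
  StronglyMeasurable.integral_prod_right (f := fun x y => v y * K x y)
    ((hv.comp measurable_snd).mul hK).stronglyMeasurable

variable [IsFiniteMeasure μ] {K : Ω → Ω → ℝ} {C : ℝ}

lemma abs_integral_mul_le (hKC : ∀ x y, |K x y| ≤ C) {v : Ω → ℝ} (hv : ∀ y, |v y| ≤ 1) (x : Ω) :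
    |∫ y, v y * K x y ∂μ| ≤ C * μ.real Set.univ := by
  rw [← Real.norm_eq_abs]
  refine norm_integral_le_of_norm_le_const (ae_of_all _ fun y => ?_)
  rw [Real.norm_eq_abs, abs_mul]
  exact (mul_le_of_le_one_left (abs_nonneg _) (hv y)).trans (hKC x y)

theorem tendsto_integral_mul_integral_mul_of_tendsto (hK : Measurable (Function.uncurry K))
    (hKC : ∀ x y, |K x y| ≤ C) {u : ℕ → Ω → ℝ} (hu : ∀ n, Measurable (u n))
    (hu1 : ∀ n x, |u n x| ≤ 1) {f : Ω → ℝ} (hf : Measurable f)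
    (hweak : ∀ g : Ω → ℝ, Integrable g μ →
      Tendsto (fun n => ∫ x, u n x * g x ∂μ) atTop (𝓝 (∫ x, f x * g x ∂μ))) :
    Tendsto (fun n => ∫ x, u n x * ∫ y, u n y * K x y ∂μ ∂μ) atTop
      (𝓝 (∫ x, f x * ∫ y, f y * K x y ∂μ ∂μ)) := by
  set T : ℕ → Ω → ℝ := fun n x => ∫ y, u n y * K x y ∂μ
  set T' : Ω → ℝ := fun x => ∫ y, f y * K x y ∂μ
  set M := C * μ.real Set.univ
  have hT_meas : ∀ n, StronglyMeasurable (T n) := fun n =>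
    stronglyMeasurable_integral_mul (hu n) hK
  have hT'_meas : StronglyMeasurable T' := stronglyMeasurable_integral_mul hf hK
  have hT_bound : ∀ n x, |T n x| ≤ M := fun n => abs_integral_mul_le hKC (hu1 n)
  have hT_lim : ∀ x, Tendsto (fun n => T n x) atTop (𝓝 (T' x)) := fun x =>
    hweak _ (.of_bound (hK.comp measurable_prodMk_left).aestronglyMeasurable C
      (ae_of_all _ fun y => hKC x y))
  -- the bound passes to the pointwise limit, although `f` itself is not known to be bounded
  have hT'_bound : ∀ x, |T' x| ≤ M := fun x =>
    le_of_tendsto' (hT_lim x).abs fun n => hT_bound n x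
  have hT'_int : Integrable T' μ :=
    .of_bound hT'_meas.aestronglyMeasurable M (ae_of_all _ hT'_bound)
  have hmul_int : ∀ n, Integrable (fun x => u n x * (T n x - T' x)) μ := fun n =>
    ((Integrable.of_bound (hT_meas n).aestronglyMeasurable M (ae_of_all _ (hT_bound n))).sub
      hT'_int).bdd_mul (hu n).aestronglyMeasurable (ae_of_all _ (hu1 n))
  have hmul_le : ∀ n x, |u n x * (T n x - T' x)| ≤ |T n x - T' x| := fun n x => by
    rw [abs_mul]
    exact mul_le_of_le_one_left (abs_nonneg _) (hu1 n x)
  -- `u n` need not converge pointwise, but it is bounded and `T n - T'` tends to `0` pointwise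
  have herr : Tendsto (fun n => ∫ x, u n x * (T n x - T' x) ∂μ) atTop (𝓝 0) := by
    simpa only [integral_zero] using tendsto_integral_of_dominated_convergence
      (f := fun _ => 0) (fun _ => M + M) (fun n => (hmul_int n).aestronglyMeasurable)
      (integrable_const _)
      (fun n => ae_of_all _ fun x => (hmul_le n x).trans
        ((abs_sub _ _).trans (add_le_add (hT_bound n x) (hT'_bound x))))
      (ae_of_all _ fun x => squeeze_zero_norm (hmul_le · x)
        (by simpa using ((hT_lim x).sub_const (T' x)).abs))
  refine (zero_add (∫ x, f x * T' x ∂μ) ▸ herr.add (hweak T' hT'_int)).congr fun n => ?_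
  rw [← integral_add (hmul_int n) (hT'_int.bdd_mul (hu n).aestronglyMeasurable
    (ae_of_all _ (hu1 n)))]
  congr with x
  ring

end Kernel

section Support

variable {Ω : Type*} [MeasurableSpace Ω] {μ : Measure Ω} [SFinite μ]

lemma isIndepSet_support_of_integral_mul_integral_mul_eq_zero {f : Ω → ℝ} (hf : Measurable f)
    (hf0 : 0 ≤ᵐ[μ] f) (hfi : Integrable f μ) {W : Ω → Ω → ℝ} (hW : Measurable (Function.uncurry W))
    (hW0 : ∀ x y, 0 ≤ W x y) {C : ℝ} (hWC : ∀ x y, |W x y| ≤ C)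
    (h : ∫ x, f x * ∫ y, f y * W x y ∂μ ∂μ = 0) :
    IsIndepSet μ W (Function.support f) := by
  rw [integral_mul_integral_mul_eq_integral_prod hfi hW hWC] at h
  have hnn : 0 ≤ᵐ[μ.prod μ] fun p : Ω × Ω => f p.1 * (f p.2 * W p.1 p.2) := by
    filter_upwards [Measure.quasiMeasurePreserving_fst.ae hf0,
      Measure.quasiMeasurePreserving_snd.ae hf0] with p h1 h2
    exact mul_nonneg h1 (mul_nonneg h2 (hW0 _ _))
  have hz := (integral_eq_zero_iff_of_nonneg_ae hnn (hfi.mul_mul_prod_bdd hW hWC)).1 h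
  refine ⟨measurableSet_support hf, ?_⟩
  filter_upwards [hz] with p hp h1 h2
  simpa [Function.mem_support.1 h1, Function.mem_support.1 h2] using hp

end Support

lemma abs_le_one_of_mem_Icc {a : ℝ} (h : a ∈ Set.Icc 0 1) : |a| ≤ 1 :=
  abs_le.2 ⟨by linarith [h.1], h.2⟩

theorem stmt_2_general {Ω : Type*} [MeasurableSpace Ω] (μ : Measure Ω) [IsProbabilityMeasure μ]
    {W : Ω → Ω → ℝ} (hW : IsGraphon W) (Wn : ℕ → Ω → Ω → ℝ)
    (hWn : ∀ n, IsGraphon (Wn n))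
    (hconv : Tendsto (fun n => cutNorm μ (fun x y => Wn n x y - W x y)) atTop (nhds 0))
    (I : ℕ → Set Ω) (hI : ∀ n, IsIndepSet μ (Wn n) (I n))
    (f : Ω → ℝ) (hf : Measurable f)
    (hweak : ∀ g : Ω → ℝ, Integrable g μ →
      Tendsto (fun n => ∫ x, Set.indicator (I n) 1 x * g x ∂μ) atTop
        (nhds (∫ x, f x * g x ∂μ))) :
    IsIndepSet μ W (Function.support f) := by
  have hI01 : ∀ n x, (I n).indicator (1 : Ω → ℝ) x ∈ Set.Icc 0 1 := fun n x => by
    by_cases hx : x ∈ I n <;> simp [hx]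
  have hf01 := ae_mem_Icc_of_tendsto_integral_mul hI01 hf hweak
  have hlim := tendsto_integral_mul_integral_mul_of_tendsto hW.1 hW.abs_le_one
    (fun n => measurable_one.indicator (hI n).1) (fun n x => abs_le_one_of_mem_Icc (hI01 n x))
    hf hweak
  have hzero : Tendsto (fun n => ∫ x, (I n).indicator 1 x * ∫ y, (I n).indicator 1 y * W x y ∂μ ∂μ)
      atTop (𝓝 0) := by
    refine squeeze_zero_norm (fun n => ?_) hconv
    rw [Real.norm_eq_abs, ← setIntegral_prod_self_eq_integral_indicator_mul (hI n).1
      (hW.integrable μ)]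
    exact (hI n).abs_setIntegral_prod_le_cutNorm_sub (hW.integrable μ) ((hWn n).integrable μ)
  exact isIndepSet_support_of_integral_mul_integral_mul_eq_zero hf (hf01.mono fun _ hx => hx.1)
    (.of_bound hf.aestronglyMeasurable 1 (hf01.mono fun _ hx => abs_le_one_of_mem_Icc hx)) hW.1
    (fun x y => (hW.2.2 x y).1) hW.abs_le_one (tendsto_nhds_unique hlim hzero)

theorem stmt_2 {Ω : Type*} [MeasurableSpace Ω] (μ : Measure Ω) [IsProbabilityMeasure μ]
    [NullSingletonClass μ] {W : Ω → Ω → ℝ} (hW : IsGraphon W) (Wn : ℕ → Ω → Ω → ℝ)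
    (hWn : ∀ n, IsGraphon (Wn n))
    (hconv : Tendsto (fun n => cutNorm μ (fun x y => Wn n x y - W x y)) atTop (nhds 0))
    (I : ℕ → Set Ω) (hI : ∀ n, IsIndepSet μ (Wn n) (I n))
    (f : Ω → ℝ) (hf : Measurable f)
    (hweak : ∀ g : Ω → ℝ, Integrable g μ →
      Tendsto (fun n => ∫ x, Set.indicator (I n) 1 x * g x ∂μ) atTop
        (nhds (∫ x, f x * g x ∂μ))) :
    IsIndepSet μ W (Function.support f) :=
  stmt_2_general μ hW Wn hWn hconv I hI f hf hweak
end

section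
/- Let G be a finite graph and W a graphon representation of G. Then the fractional clique number of G equals that of W: ω_frac(G) = ω_frac(W). -/
open MeasureTheory ENNReal Filter
open scoped Classical

open MeasureTheory ENNReal Filter

/-!
Let `P v` be the parts of the step graphon, each of measure `1 / |V|`. A fractional clique `f`
of `G` spreads out to the step function with value `|V| f v` on `P v`: an independent set `I` of
`W` meets with positive measure only parts indexed by an independent set of `G`, and meets each of
them in measure at most `1 / |V|`. Conversely a fractional clique `g` of `W` collapses to
`v ↦ ∫_{P v} g`, since the union of the parts over an independent set of `G` is independent in
`W`. Both transformations preserve the total mass.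
-/

def IsGraphFracClique {V : Type*} (G : SimpleGraph V) (f : V → ℝ≥0∞) : Prop :=
  ∀ I : Set V, GraphIndep G I → ∑' v : I, f v ≤ 1

theorem fracClique_eq_iSup {V : Type*} [Fintype V] (G : SimpleGraph V) :
    fracClique G = ⨆ (f : V → ℝ≥0∞) (_ : IsGraphFracClique G f), ∑ v, f v :=
  rfl

noncomputable def partitionStep {Ω V : Type*} [Fintype V] (P : V → Set Ω) (c : V → ℝ≥0∞)
    (x : Ω) : ℝ≥0∞ :=
  ∑ v, (P v).indicator (fun _ => c v) x

theorem partitionStep_ne_top {Ω V : Type*} [Fintype V] {P : V → Set Ω} {c : V → ℝ≥0∞}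
    (hc : ∀ v, c v ≠ ∞) (x : Ω) : partitionStep P c x ≠ ∞ :=
  ENNReal.sum_ne_top.2 fun v _ =>
    ne_top_of_le_ne_top (hc v) (Set.indicator_le_self (P v) (fun _ => c v) x)

section

variable {Ω : Type*} [MeasurableSpace Ω] {μ : Measure Ω} {W : Ω → Ω → ℝ}
  {V : Type*} {G : SimpleGraph V} {P : V → Set Ω}

theorem IsGraphFracClique.le_one {f : V → ℝ≥0∞} (hf : IsGraphFracClique G f) (v : V) :
    f v ≤ 1 := by
  simpa using hf {v} (Set.pairwise_singleton _ _)

theorem isIndepSet_biUnion_of_graphIndep [Countable V] (hP : ∀ v, MeasurableSet (P v))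
    (hadj : ∀ u v, ∀ᵐ p ∂(μ.prod μ), p.1 ∈ P u → p.2 ∈ P v →
      W p.1 p.2 = if G.Adj u v then 1 else 0)
    {S : Set V} (hS : GraphIndep G S) : IsIndepSet μ W (⋃ v ∈ S, P v) := by
  refine ⟨MeasurableSet.biUnion S.to_countable fun v _ => hP v, ?_⟩
  filter_upwards [ae_all_iff.2 fun u => ae_all_iff.2 (hadj u)] with p hp hp₁ hp₂
  obtain ⟨u, hu, hp₁⟩ := Set.mem_iUnion₂.1 hp₁
  obtain ⟨v, hv, hp₂⟩ := Set.mem_iUnion₂.1 hp₂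
  have hnadj : ¬ G.Adj u v := fun h => hS hu hv (G.ne_of_adj h) h
  simpa [hnadj] using hp u v hp₁ hp₂

theorem graphIndep_setOf_measure_inter_ne_zero [SFinite μ]
    (hadj : ∀ u v, ∀ᵐ p ∂(μ.prod μ), p.1 ∈ P u → p.2 ∈ P v →
      W p.1 p.2 = if G.Adj u v then 1 else 0)
    {I : Set Ω} (hI : IsIndepSet μ W I) : GraphIndep G {v | μ (P v ∩ I) ≠ 0} := by
  intro u hu v hv _ huv
  have hnull : μ.prod μ ((P u ∩ I) ×ˢ (P v ∩ I)) = 0 := by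
    refine measure_mono_null ?_ (ae_iff.1 ((hadj u v).and hI.2))
    rintro p ⟨⟨hpu, hpI⟩, hpv, hpI'⟩ ⟨hstep, hzero⟩
    simp [huv, hzero hpI hpI'] at hstep
    exact hstep hpu hpv
  rw [Measure.prod_prod] at hnull
  exact mul_ne_zero hu hv hnull

theorem lintegral_eq_sum_setLIntegral [Fintype V] (hP : ∀ v, MeasurableSet (P v))
    (hPd : Pairwise (Function.onFun Disjoint P)) (hPu : ⋃ v, P v = Set.univ) (g : Ω → ℝ≥0∞) :
    ∫⁻ x, g x ∂μ = ∑ v, ∫⁻ x in P v, g x ∂μ := by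
  rw [← setLIntegral_univ, ← hPu, lintegral_iUnion hP hPd, tsum_fintype]

theorem IsFracClique.isGraphFracClique_setLIntegral [Countable V]
    (hP : ∀ v, MeasurableSet (P v)) (hPd : Pairwise (Function.onFun Disjoint P))
    (hadj : ∀ u v, ∀ᵐ p ∂(μ.prod μ), p.1 ∈ P u → p.2 ∈ P v →
      W p.1 p.2 = if G.Adj u v then 1 else 0)
    {g : Ω → ℝ≥0∞} (hg : IsFracClique μ W g) :
    IsGraphFracClique G fun v => ∫⁻ x in P v, g x ∂μ := by
  intro S hS
  rw [← lintegral_biUnion S.to_countable (fun v _ => hP v) (hPd.set_pairwise S)]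
  exact hg.2.2 _ (isIndepSet_biUnion_of_graphIndep hP hadj hS)

variable [Fintype V]

theorem measurable_partitionStep (hP : ∀ v, MeasurableSet (P v)) (c : V → ℝ≥0∞) :
    Measurable (partitionStep P c) :=
  Finset.measurable_sum _ fun v _ => measurable_const.indicator (hP v)

theorem setLIntegral_partitionStep (hP : ∀ v, MeasurableSet (P v)) (c : V → ℝ≥0∞)
    (I : Set Ω) :
    ∫⁻ x in I, partitionStep P c x ∂μ = ∑ v, c v * μ (P v ∩ I) := by
  simp only [partitionStep]
  rw [lintegral_finsetSum _ fun v _ => measurable_const.indicator (hP v)]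
  refine Finset.sum_congr rfl fun v _ => ?_
  rw [lintegral_indicator (hP v), setLIntegral_const, Measure.restrict_apply (hP v)]

theorem card_mul_measure_part_eq_one (hμP : ∀ v, μ (P v) = 1 / (Fintype.card V : ℝ≥0∞)) (v : V) :
    (Fintype.card V : ℝ≥0∞) * μ (P v) = 1 := by
  have hcard : (Fintype.card V : ℝ≥0∞) ≠ 0 := Nat.cast_ne_zero.2 (Fintype.card_pos_iff.2 ⟨v⟩).ne'
  rw [hμP, one_div, ENNReal.mul_inv_cancel hcard (natCast_ne_top _)]

theorem lintegral_partitionStep_card_mul (hP : ∀ v, MeasurableSet (P v))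
    (hμP : ∀ v, μ (P v) = 1 / (Fintype.card V : ℝ≥0∞)) (f : V → ℝ≥0∞) :
    ∫⁻ x, partitionStep P (fun v => Fintype.card V * f v) x ∂μ = ∑ v, f v := by
  rw [← setLIntegral_univ, setLIntegral_partitionStep hP _ Set.univ]
  refine Finset.sum_congr rfl fun v _ => ?_
  rw [Set.inter_univ, mul_right_comm, card_mul_measure_part_eq_one hμP, one_mul]

theorem IsGraphFracClique.isFracClique_partitionStep [SFinite μ]
    (hP : ∀ v, MeasurableSet (P v)) (hμP : ∀ v, μ (P v) = 1 / (Fintype.card V : ℝ≥0∞))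
    (hadj : ∀ u v, ∀ᵐ p ∂(μ.prod μ), p.1 ∈ P u → p.2 ∈ P v →
      W p.1 p.2 = if G.Adj u v then 1 else 0)
    {f : V → ℝ≥0∞} (hf : IsGraphFracClique G f) :
    IsFracClique μ W (partitionStep P fun v => Fintype.card V * f v) := by
  refine ⟨measurable_partitionStep hP _,
    partitionStep_ne_top fun v => mul_ne_top (natCast_ne_top _) (ne_top_of_le_ne_top one_ne_top
      (hf.le_one v)), fun I hI => ?_⟩
  set S := Finset.univ.filter fun v => μ (P v ∩ I) ≠ 0
  have hS : GraphIndep G (S : Set V) := by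
    simpa [S] using graphIndep_setOf_measure_inter_ne_zero hadj hI
  have hterm : ∀ v, Fintype.card V * f v * μ (P v ∩ I) ≤ f v := fun v =>
    calc Fintype.card V * f v * μ (P v ∩ I)
        ≤ Fintype.card V * f v * μ (P v) := by gcongr; exact Set.inter_subset_left
      _ = f v := by rw [mul_right_comm, card_mul_measure_part_eq_one hμP, one_mul]
  calc ∫⁻ x in I, partitionStep P (fun v => Fintype.card V * f v) x ∂μ
      = ∑ v ∈ S, Fintype.card V * f v * μ (P v ∩ I) := by
        rw [setLIntegral_partitionStep hP _ I, Finset.sum_filter_of_ne]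
        exact fun v _ h => right_ne_zero_of_mul h
    _ ≤ ∑ v ∈ S, f v := Finset.sum_le_sum fun v _ => hterm v
    _ = ∑' v : (S : Set V), f v := (Finset.tsum_subtype' S f).symm
    _ ≤ 1 := hf _ hS

end

theorem stmt_13_general {Ω : Type*} [MeasurableSpace Ω] (μ : Measure Ω) [IsProbabilityMeasure μ]
    {W : Ω → Ω → ℝ} {V : Type*} [Fintype V] (G : SimpleGraph V) (hrep : IsGraphonRep μ G W) :
    fracClique G = graphonFracClique μ W := by
  obtain ⟨P, hP, hPd, hμP, hPu, hadj⟩ := hrep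
  rw [fracClique_eq_iSup]
  apply le_antisymm
  · refine iSup₂_le fun f hf => ?_
    rw [← lintegral_partitionStep_card_mul hP hμP f]
    exact le_iSup₂ (f := fun g (_ : IsFracClique μ W g) => ∫⁻ x, g x ∂μ) _
      (hf.isFracClique_partitionStep hP hμP hadj)
  · refine iSup₂_le fun g hg => ?_
    rw [lintegral_eq_sum_setLIntegral hP hPd hPu]
    exact le_iSup₂ (f := fun f (_ : IsGraphFracClique G f) => ∑ v, f v) _
      (hg.isGraphFracClique_setLIntegral hP hPd hadj)

theorem stmt_13 {Ω : Type*} [MeasurableSpace Ω] (μ : Measure Ω) [IsProbabilityMeasure μ]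
    [NullSingletonClass μ] {W : Ω → Ω → ℝ} (hW : IsGraphon W)
    {V : Type*} [Fintype V] (G : SimpleGraph V) (hrep : IsGraphonRep μ G W) :
    fracClique G = graphonFracClique μ W :=
  stmt_13_general μ G hrep
end
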